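/- arXiv:1202.0802 — 4 statements merged into one kernel-verified Lean document; each statement's English description precedes it below -/
import Mathlib

section
/- Let σ be a finite Borel measure on the unit circle and F a finite-dimensional subspace of L²(σ) such that z·F ⊆ F + span{1}. If F contains no indicator function of a singleton, then F is a direct sum of subspaces Q(λ_k, p_k) for finitely many points λ_k ∈ ℂ, where Q(λ,p) = span{(z-λ)^{-j} : 1 ≤ j ≤ p}. -/
open MeasureTheory

/-- The one-dimensional subspace of `L²(σ)` spanned by the constant function `1`. -/
noncomputable def oneSpan (σ : MeasureTheory.Measure ℂ) : Submodule ℂ (Lp ℂ 2 σ) :=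
  Submodule.span ℂ {g : Lp ℂ 2 σ | (g : ℂ → ℂ) =ᵐ[σ] fun _ => (1 : ℂ)}

/-- `Q(l, p) = span{(z - l)^{-j} : 1 ≤ j ≤ p}` inside `L²(σ)`. -/
noncomputable def Qspace (σ : MeasureTheory.Measure ℂ) (l : ℂ) (p : ℕ) : Submodule ℂ (Lp ℂ 2 σ) :=
  Submodule.span ℂ {g : Lp ℂ 2 σ | ∃ j : ℕ, 1 ≤ j ∧ j ≤ p ∧
    (g : ℂ → ℂ) =ᵐ[σ] fun ξ => ((ξ - l)⁻¹) ^ j}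


/-!
Write `z f = A f + c(f)·1` for `f ∈ F`, with `A` an endomorphism of `F` and `c` a linear functional
(`c = 0` if `1 ∈ F`; otherwise a functional vanishing on `F` separates the two summands).
On the generalized eigenspace `E` of `A` at `μ`, with `B = A - μ`, this reads
`(z - μ) f = B f + c(f)` a.e. For an eigenvector `v` it gives `(z - μ) v = c(v)`, so `c(v) ≠ 0`
(otherwise `v` is a multiple of the indicator of `{μ}`) and hence `σ{μ} = 0`. Dividing by `z - μ`
repeatedly, every `f ∈ E` equals `∑_{i < d} c(Bⁱ f) (z - μ)^{-(i+1)}` with `d = dim E`. So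
`f ↦ (c(Bⁱ f))_{i < d}` is injective from `E` to `ℂ^d`, hence bijective, and the preimages of the
standard basis vectors are the functions `(z - μ)^{-j}`, `1 ≤ j ≤ d`: thus `E = Q(μ, d)`.
The decomposition of `F` into the generalized eigenspaces of `A` finishes the proof.
-/

open Module
open scoped ENNReal

theorem IsNilpotent.pow_finrank_eq_zero {K V : Type*} [Field K] [AddCommGroup V] [Module K V]
    [FiniteDimensional K V] {N : Module.End K V} (h : IsNilpotent N) : N ^ finrank K V = 0 := by
  simpa [h.charpoly_eq_X_pow_finrank] using N.aeval_self_charpoly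

theorem Module.End.pow_finrank_maxGenEigenspace_apply_eq_zero {K V : Type*} [Field K]
    [AddCommGroup V] [Module K V] [FiniteDimensional K V] (A : Module.End K V) (μ : K) {f : V}
    (hf : f ∈ A.maxGenEigenspace μ) :
    ((A - algebraMap K (Module.End K V) μ) ^ finrank K (A.maxGenEigenspace μ)) f = 0 := by
  have := LinearMap.congr_fun
    (A.isNilpotent_restrict_maxGenEigenspace_sub_algebraMap μ).pow_finrank_eq_zero ⟨f, hf⟩
  erw [Module.End.pow_restrict _, LinearMap.restrict_apply] at this
  simpa using this

theorem Submodule.exists_end_add_smul_eq {K V : Type*} [Field K] [AddCommGroup V] [Module K V]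
    (F : Submodule K V) (e : V) (T : F →ₗ[K] V) (hT : ∀ f, T f ∈ F ⊔ K ∙ e) :
    ∃ (A : Module.End K F) (c : F →ₗ[K] K), ∀ f, (A f : V) + c f • e = T f := by
  by_cases he : e ∈ F
  · have hsup : F ⊔ K ∙ e = F := sup_eq_left.2 ((span_singleton_le_iff_mem _ _).2 he)
    exact ⟨T.codRestrict F fun f => by simpa only [hsup] using hT f, 0, fun f => by simp⟩
  · obtain ⟨φ, hφe, hφF⟩ := exists_dual_map_eq_bot_of_notMem he inferInstance
    let c : F →ₗ[K] K := (φ e)⁻¹ • φ ∘ₗ T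
    have hmem : ∀ f, (T - c.smulRight e) f ∈ F := by
      intro f
      obtain ⟨u, hu, v, hv, huv⟩ := mem_sup.1 (hT f)
      obtain ⟨d, rfl⟩ := mem_span_singleton.1 hv
      have hφu : φ u = 0 := by simpa [hφF] using mem_map_of_mem (f := φ) hu
      have hc : c f = d := by simp [c, ← huv, hφu]; field_simp
      rwa [LinearMap.sub_apply, LinearMap.smulRight_apply, hc, ← huv, add_sub_cancel_right]
    exact ⟨(T - c.smulRight e).codRestrict F hmem, c, fun f => by simp⟩

theorem Module.End.exists_finset_iSupIndep_map_maxGenEigenspace {K V : Type*} [Field K]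
    [IsAlgClosed K] [AddCommGroup V] [Module K V] {F : Submodule K V} [FiniteDimensional K F]
    (A : Module.End K F) :
    ∃ s : Finset K, (∀ μ ∈ s, A.maxGenEigenspace μ ≠ ⊥) ∧
      iSupIndep (fun μ : s => (A.maxGenEigenspace μ).map F.subtype) ∧
      ⨆ μ : s, (A.maxGenEigenspace μ).map F.subtype = F := by
  have hind := A.independent_maxGenEigenspace
  have hfin := Submodule.finite_ne_bot_of_iSupIndep hind
  have hsup : ⨆ μ : hfin.toFinset, A.maxGenEigenspace μ = ⊤ := by
    refine top_unique (A.iSup_maxGenEigenspace_eq_top ▸ iSup_le fun μ => ?_)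
    by_cases hμ : A.maxGenEigenspace μ = ⊥
    · exact hμ.le.trans bot_le
    · exact le_iSup_of_le ⟨μ, hfin.mem_toFinset.2 hμ⟩ le_rfl
  refine ⟨hfin.toFinset, fun μ hμ => hfin.mem_toFinset.1 hμ,
    F.subtype.iSupIndep_map F.injective_subtype (hind.comp Subtype.val_injective), ?_⟩
  rw [← Submodule.map_iSup, hsup, Submodule.map_subtype_top]

theorem exists_linearMap_ae_eq_mul {α : Type*} [MeasurableSpace α] {ν : Measure α} {q : ℝ≥0∞}
    (m : α → ℂ) (F : Submodule ℂ (Lp ℂ q ν))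
    (h : ∀ f ∈ F, ∃ g : Lp ℂ q ν, g =ᵐ[ν] fun x => m x * f x) :
    ∃ T : F →ₗ[ℂ] Lp ℂ q ν, ∀ f : F, T f =ᵐ[ν] fun x => m x * (f : Lp ℂ q ν) x := by
  choose T hT using fun f : F => h f f.2
  refine ⟨{ toFun := T, map_add' := fun f g => ?_, map_smul' := fun a f => ?_ }, hT⟩
  · refine Lp.ext ?_
    filter_upwards [hT (f + g), hT f, hT g, Lp.coeFn_add (T f) (T g),
      Lp.coeFn_add (f : Lp ℂ q ν) g] with x h h₁ h₂ h₃ h₄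
    simp only [Submodule.coe_add, h, h₃, h₄, Pi.add_apply, h₁, h₂]
    ring
  · refine Lp.ext ?_
    filter_upwards [hT (a • f), hT f, Lp.coeFn_smul a (T f),
      Lp.coeFn_smul a (f : Lp ℂ q ν)] with x h h₁ h₂ h₃
    simp only [Submodule.coe_smul, h, h₂, h₃, Pi.smul_apply, h₁, smul_eq_mul, RingHom.id_apply]
    ring

theorem oneSpan_eq_span_singleton (σ : Measure ℂ) [IsFiniteMeasure σ] :
    oneSpan σ = ℂ ∙ Lp.const 2 σ (1 : ℂ) := by
  refine congrArg _ (Set.ext fun g => ?_)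
  simp only [Set.mem_ofPred_eq, Set.mem_singleton_iff]
  exact ⟨fun hg => Lp.ext (hg.trans (Lp.coeFn_const ..).symm), fun hg => hg ▸ Lp.coeFn_const ..⟩

theorem exists_end_ae_mul_eq {σ : Measure ℂ} [IsFiniteMeasure σ] (F : Submodule ℂ (Lp ℂ 2 σ))
    (hinv : ∀ f : Lp ℂ 2 σ, f ∈ F →
      ∃ g : Lp ℂ 2 σ, g ∈ F ⊔ oneSpan σ ∧ (g : ℂ → ℂ) =ᵐ[σ] fun ξ => ξ * f ξ) :
    ∃ (A : Module.End ℂ F) (c : F →ₗ[ℂ] ℂ), ∀ f : F,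
      ∀ᵐ ξ ∂σ, ξ * (f : Lp ℂ 2 σ) ξ = (A f : Lp ℂ 2 σ) ξ + c f := by
  obtain ⟨T, hT⟩ := exists_linearMap_ae_eq_mul (fun ξ => ξ) F fun f hf =>
    (hinv f hf).imp fun _ => And.right
  have hTF : ∀ f, T f ∈ F ⊔ ℂ ∙ Lp.const 2 σ (1 : ℂ) := fun f => by
    obtain ⟨g, hg, hgT⟩ := hinv f f.2
    rwa [← oneSpan_eq_span_singleton, ← Lp.ext (hgT.trans (hT f).symm)]
  obtain ⟨A, c, hAc⟩ := F.exists_end_add_smul_eq _ T hTF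
  refine ⟨A, c, fun f => ?_⟩
  filter_upwards [hT f, hAc f ▸ Lp.coeFn_add (A f : Lp ℂ 2 σ) (c f • Lp.const 2 σ (1 : ℂ)),
    Lp.coeFn_smul (c f) (Lp.const 2 σ (1 : ℂ)), Lp.coeFn_const (p := 2) (μ := σ) (c := (1 : ℂ))]
    with ξ h₁ h₂ h₃ h₄
  simp only [Pi.add_apply, Pi.smul_apply, Function.const_apply, smul_eq_mul] at h₂ h₃ h₄
  rw [← h₁, h₂, h₃, h₄, mul_one]

section PartialFractions

variable {σ : Measure ℂ} {q : ℝ≥0∞} {F : Submodule ℂ (Lp ℂ q σ)}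

theorem eq_zero_of_ae_sub_mul_eq_zero
    (hnoind : ∀ (l : ℂ) (g : Lp ℂ q σ), g ∈ F →
      (g : ℂ → ℂ) =ᵐ[σ] Set.indicator {l} (fun _ => (1 : ℂ)) → g = 0)
    {f : Lp ℂ q σ} (hf : f ∈ F) {l : ℂ} (h : ∀ᵐ ξ ∂σ, (ξ - l) * f ξ = 0) : f = 0 := by
  have hind : (f : ℂ → ℂ) =ᵐ[σ] fun ξ => f l * Set.indicator {l} (fun _ => (1 : ℂ)) ξ := by
    filter_upwards [h] with ξ hξ
    by_cases hξl : ξ = l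
    · simp [hξl]
    · simpa [hξl, sub_ne_zero.2 hξl] using hξ
  by_cases hl : f l = 0
  · refine Lp.eq_zero_iff_ae_eq_zero.2 (hind.trans ?_)
    simp only [hl, zero_mul]
    rfl
  · have := hnoind l ((f l)⁻¹ • f) (F.smul_mem _ hf) <| by
      filter_upwards [Lp.coeFn_smul (f l)⁻¹ f, hind] with ξ h₁ h₂
      simp [h₁, h₂, hl]
    simpa [hl] using this

variable {c : F →ₗ[ℂ] ℂ} {B : Module.End ℂ F} {μ : ℂ}

theorem ae_ne_of_apply_eq_zero
    (hnoind : ∀ (l : ℂ) (g : Lp ℂ q σ), g ∈ F →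
      (g : ℂ → ℂ) =ᵐ[σ] Set.indicator {l} (fun _ => (1 : ℂ)) → g = 0)
    (hB : ∀ f : F, ∀ᵐ ξ ∂σ, (ξ - μ) * (f : Lp ℂ q σ) ξ = (B f : Lp ℂ q σ) ξ + c f)
    {v : F} (hv : v ≠ 0) (hBv : B v = 0) : ∀ᵐ ξ ∂σ, ξ ≠ μ := by
  have hrel : ∀ᵐ ξ ∂σ, (ξ - μ) * (v : Lp ℂ q σ) ξ = c v := by
    filter_upwards [hB v, Lp.coeFn_zero ℂ q σ] with ξ h₁ h₂
    rw [h₁, hBv, Submodule.coe_zero, h₂, Pi.zero_apply, zero_add]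
  have hc : c v ≠ 0 := fun hc => hv <| by
    simpa using eq_zero_of_ae_sub_mul_eq_zero hnoind v.2 (by simpa [hc] using hrel)
  filter_upwards [hrel] with ξ hξ hξμ
  simp only [hξμ, sub_self, zero_mul] at hξ
  exact hc hξ.symm

theorem ae_eq_sum_of_pow_apply_eq_zero
    (hμ : ∀ᵐ ξ ∂σ, ξ ≠ μ)
    (hB : ∀ f : F, ∀ᵐ ξ ∂σ, (ξ - μ) * (f : Lp ℂ q σ) ξ = (B f : Lp ℂ q σ) ξ + c f)
    (n : ℕ) (f : F) (hf : (B ^ n) f = 0) : (f : Lp ℂ q σ) =ᵐ[σ]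
      fun ξ => ∑ i : Fin n, c ((B ^ (i : ℕ)) f) * (ξ - μ)⁻¹ ^ ((i : ℕ) + 1) := by
  induction n generalizing f with
  | zero =>
    filter_upwards [Lp.coeFn_zero ℂ q σ] with ξ h
    rw [show f = 0 from hf, Submodule.coe_zero, h, Pi.zero_apply, Finset.univ_eq_empty,
      Finset.sum_empty]
  | succ n ih =>
    have hBf := ih (B f) (by rwa [← Module.End.mul_apply, ← pow_succ])
    filter_upwards [hB f, hBf, hμ] with ξ h₁ h₂ hξ
    have hξμ : ξ - μ ≠ 0 := sub_ne_zero.2 hξ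
    rw [(eq_inv_mul_iff_mul_eq₀ hξμ).2 h₁, h₂, Fin.sum_univ_succ, mul_add, Finset.mul_sum,
      add_comm]
    congr 1
    · simp [mul_comm]
    · refine Finset.sum_congr rfl fun i _ => ?_
      rw [Fin.val_succ, pow_succ B, Module.End.mul_apply]
      ring

end PartialFractions

theorem Qspace_eq_span_range {σ : Measure ℂ} {l : ℂ} {p : ℕ} (g : Fin p → Lp ℂ 2 σ)
    (hg : ∀ i : Fin p, (g i : ℂ → ℂ) =ᵐ[σ] fun ξ => (ξ - l)⁻¹ ^ ((i : ℕ) + 1)) :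
    Qspace σ l p = Submodule.span ℂ (Set.range g) := by
  refine congrArg _ (Set.ext fun h => ⟨?_, ?_⟩)
  · rintro ⟨j, hj1, hjp, hh⟩
    refine ⟨⟨j - 1, by omega⟩, Lp.ext ((hg _).trans ?_)⟩
    rw [Nat.sub_add_cancel hj1]
    exact hh.symm
  · rintro ⟨i, rfl⟩
    exact ⟨i + 1, by omega, i.isLt, hg i⟩

theorem memLp_and_Qspace_finrank_eq_map {σ : Measure ℂ} {F : Submodule ℂ (Lp ℂ 2 σ)}
    {c : F →ₗ[ℂ] ℂ} {B : Module.End ℂ F} {μ : ℂ} (hμ : ∀ᵐ ξ ∂σ, ξ ≠ μ)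
    (hB : ∀ f : F, ∀ᵐ ξ ∂σ, (ξ - μ) * (f : Lp ℂ 2 σ) ξ = (B f : Lp ℂ 2 σ) ξ + c f)
    (E : Submodule ℂ F) [FiniteDimensional ℂ E] (hE : ∀ f ∈ E, (B ^ finrank ℂ E) f = 0) :
    (∀ j, 1 ≤ j → j ≤ finrank ℂ E → MemLp (fun ξ => (ξ - μ)⁻¹ ^ j) 2 σ) ∧
      Qspace σ μ (finrank ℂ E) = E.map F.subtype := by
  set d := finrank ℂ E
  let Φ : E →ₗ[ℂ] Fin d → ℂ := LinearMap.pi (fun i : Fin d => c ∘ₗ B ^ (i : ℕ)) ∘ₗ E.subtype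
  have hexp (f : E) : ((f : F) : Lp ℂ 2 σ) =ᵐ[σ]
      fun ξ => ∑ i, Φ f i * (ξ - μ)⁻¹ ^ ((i : ℕ) + 1) :=
    ae_eq_sum_of_pow_apply_eq_zero hμ hB d f (hE f f.2)
  have hinj : Function.Injective Φ := by
    refine (injective_iff_map_eq_zero Φ).2 fun f hf => ?_
    have : ((f : F) : Lp ℂ 2 σ) = 0 := Lp.eq_zero_iff_ae_eq_zero.2 <| (hexp f).trans <| by
      simp only [hf, Pi.zero_apply, zero_mul, Finset.sum_const_zero]
      rfl
    simpa using this
  let Ψ := Φ.linearEquivOfInjective hinj (by simp [d])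
  let g : Fin d → Lp ℂ 2 σ := fun i => ((Ψ.symm (Pi.single i 1) : F) : Lp ℂ 2 σ)
  have hg (i : Fin d) : (g i : ℂ → ℂ) =ᵐ[σ] fun ξ => (ξ - μ)⁻¹ ^ ((i : ℕ) + 1) := by
    filter_upwards [hexp (Ψ.symm (Pi.single i 1))] with ξ h
    have hΦΨ : Φ (Ψ.symm (Pi.single i 1)) = Pi.single i 1 := Ψ.apply_symm_apply _
    simp [g, h, hΦΨ, Pi.single_apply]
  refine ⟨fun j hj1 hjd => ?_, ?_⟩
  · obtain ⟨i, rfl⟩ : ∃ i : Fin d, (i : ℕ) + 1 = j := ⟨⟨j - 1, by omega⟩, by simp; omega⟩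
    exact (Lp.memLp (g i)).ae_eq (hg i)
  · rw [Qspace_eq_span_range g hg, ← Submodule.map_subtype_top E,
      ← ((Pi.basisFun ℂ (Fin d)).map Ψ.symm).span_eq, Submodule.map_span, Submodule.map_span,
      ← Set.range_comp, ← Set.range_comp]
    congr 2
    funext i
    simp [g]

theorem exists_Qspace_eq_map_maxGenEigenspace {σ : Measure ℂ} {F : Submodule ℂ (Lp ℂ 2 σ)}
    [FiniteDimensional ℂ F]
    (hnoind : ∀ (l : ℂ) (g : Lp ℂ 2 σ), g ∈ F →
      (g : ℂ → ℂ) =ᵐ[σ] Set.indicator {l} (fun _ => (1 : ℂ)) → g = 0)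
    {A : Module.End ℂ F} {c : F →ₗ[ℂ] ℂ}
    (hAc : ∀ f : F, ∀ᵐ ξ ∂σ, ξ * (f : Lp ℂ 2 σ) ξ = (A f : Lp ℂ 2 σ) ξ + c f)
    {μ : ℂ} (hμ : A.maxGenEigenspace μ ≠ ⊥) :
    ∃ p, 1 ≤ p ∧ (∀ j, 1 ≤ j → j ≤ p → MemLp (fun ξ => ((ξ - μ)⁻¹) ^ j) 2 σ) ∧
      Qspace σ μ p = (A.maxGenEigenspace μ).map F.subtype := by
  set B := A - algebraMap ℂ (Module.End ℂ F) μ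
  have hB (f : F) : ∀ᵐ ξ ∂σ, (ξ - μ) * (f : Lp ℂ 2 σ) ξ = (B f : Lp ℂ 2 σ) ξ + c f := by
    filter_upwards [hAc f, Lp.coeFn_sub (A f : Lp ℂ 2 σ) (μ • f),
      Lp.coeFn_smul μ (f : Lp ℂ 2 σ)] with ξ h₁ h₂ h₃
    simp only [B, LinearMap.sub_apply, Module.algebraMap_end_apply, Submodule.coe_sub,
      Submodule.coe_smul, h₂, h₃, Pi.sub_apply, Pi.smul_apply, smul_eq_mul]
    linear_combination h₁
  obtain ⟨v, hvE, hv⟩ := ((Module.End.hasUnifEigenvalue_iff_hasUnifEigenvalue_one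
    (k := ⊤) (by simp)).1 hμ).exists_hasUnifEigenvector
  have hatom := ae_ne_of_apply_eq_zero hnoind hB hv
    (by simp [B, Module.End.mem_genEigenspace_one.1 hvE])
  obtain ⟨hmem, hQ⟩ := memLp_and_Qspace_finrank_eq_map hatom hB _
    fun f => A.pow_finrank_maxGenEigenspace_apply_eq_zero μ
  exact ⟨_, Submodule.one_le_finrank_iff.2 hμ, hmem, hQ⟩

theorem stmt2_general (σ : MeasureTheory.Measure ℂ) [IsFiniteMeasure σ]
    (F : Submodule ℂ (Lp ℂ 2 σ)) (hfd : FiniteDimensional ℂ F)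
    (hinv : ∀ f : Lp ℂ 2 σ, f ∈ F →
      ∃ g : Lp ℂ 2 σ, g ∈ F ⊔ oneSpan σ ∧ (g : ℂ → ℂ) =ᵐ[σ] fun ξ => ξ * f ξ)
    (hnoind : ∀ (l : ℂ) (g : Lp ℂ 2 σ), g ∈ F →
      (g : ℂ → ℂ) =ᵐ[σ] Set.indicator {l} (fun _ => (1 : ℂ)) → g = 0) :
    ∃ (s : Finset ℂ) (p : ℂ → ℕ),
      (∀ l ∈ s, 1 ≤ p l) ∧
      (∀ l ∈ s, ∀ j : ℕ, 1 ≤ j → j ≤ p l → MemLp (fun ξ => ((ξ - l)⁻¹) ^ j) 2 σ) ∧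
      iSupIndep (fun l : s => Qspace σ (l : ℂ) (p l)) ∧
      F = ⨆ l : s, Qspace σ (l : ℂ) (p l) := by
  obtain ⟨A, c, hAc⟩ := exists_end_ae_mul_eq F hinv
  choose! p hp using fun μ (hμ : A.maxGenEigenspace μ ≠ ⊥) =>
    exists_Qspace_eq_map_maxGenEigenspace hnoind hAc hμ
  obtain ⟨s, hs, hind, hsup⟩ := A.exists_finset_iSupIndep_map_maxGenEigenspace
  have hQ : (fun l : s => Qspace σ l (p l)) = fun l : s => (A.maxGenEigenspace l).map F.subtype :=
    funext fun l => (hp l (hs l l.2)).2.2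
  exact ⟨s, p, fun l hl => (hp l (hs l hl)).1, fun l hl => (hp l (hs l hl)).2.1,
    hQ ▸ hind, hQ ▸ hsup.symm⟩

/-- Let `σ` be a finite Borel measure on the unit circle and `F` a finite-dimensional subspace of
`L²(σ)` with `z·F ⊆ F + span{1}`.  If `F` contains no indicator of a singleton, then `F` is a
finite direct sum of the subspaces `Q(l_k, p_k)`. -/
theorem stmt2 (σ : MeasureTheory.Measure ℂ) [IsFiniteMeasure σ]
    (hsupp : σ {z : ℂ | ‖z‖ ≠ 1} = 0)
    (F : Submodule ℂ (Lp ℂ 2 σ)) (hfd : FiniteDimensional ℂ F)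
    (hinv : ∀ f : Lp ℂ 2 σ, f ∈ F →
      ∃ g : Lp ℂ 2 σ, g ∈ F ⊔ oneSpan σ ∧ (g : ℂ → ℂ) =ᵐ[σ] fun ξ => ξ * f ξ)
    (hnoind : ∀ (l : ℂ) (g : Lp ℂ 2 σ), g ∈ F →
      (g : ℂ → ℂ) =ᵐ[σ] Set.indicator {l} (fun _ => (1 : ℂ)) → g = 0) :
    ∃ (s : Finset ℂ) (p : ℂ → ℕ),
      (∀ l ∈ s, 1 ≤ p l) ∧
      (∀ l ∈ s, ∀ j : ℕ, 1 ≤ j → j ≤ p l → MemLp (fun ξ => ((ξ - l)⁻¹) ^ j) 2 σ) ∧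
      iSupIndep (fun l : s => Qspace σ (l : ℂ) (p l)) ∧
      F = ⨆ l : s, Qspace σ (l : ℂ) (p l) :=
  stmt2_general σ F hfd hinv hnoind
end

section
/- Let σ be a finite Borel measure on the unit circle, F a finite-dimensional subspace of L²(σ) with z·F ⊆ F + span{1}, and let 𝒫 be the projection onto F + span{1} with range F and kernel span{1} (assuming 1 ∉ F). If T = 𝒫 ∘ M_z restricted to F has an eigenvector f with eigenvalue λ satisfying σ({λ}) > 0 and λ on the unit circle, then f is a scalar multiple of the indicator of {λ}. -/
open MeasureTheory

/-- If `T = 𝒫 ∘ M_z` on a finite-dimensional subspace `F ⊆ L²(σ)` (with `𝒫` the projection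
onto `F` along `span{1}`) has an eigenvector `f` with eigenvalue `l`, where `l` lies on the unit
circle and `σ({l}) > 0`, then `f` is a scalar multiple of the indicator of `{l}`. -/
theorem stmt3 (σ : MeasureTheory.Measure ℂ) [IsFiniteMeasure σ]
    (hsupp : σ {z : ℂ | ‖z‖ ≠ 1} = 0)
    (F : Submodule ℂ (Lp ℂ 2 σ)) (hfd : FiniteDimensional ℂ F)
    (hone : ∀ g : Lp ℂ 2 σ, (g : ℂ → ℂ) =ᵐ[σ] (fun _ => (1 : ℂ)) → g ∉ F)
    (hinv : ∀ f : Lp ℂ 2 σ, f ∈ F →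
      ∃ g : Lp ℂ 2 σ, g ∈ F ⊔ oneSpan σ ∧ (g : ℂ → ℂ) =ᵐ[σ] fun ξ => ξ * f ξ)
    (P : Lp ℂ 2 σ →ₗ[ℂ] Lp ℂ 2 σ)
    (hPrange : ∀ x : Lp ℂ 2 σ, P x ∈ F)
    (hPker : ∀ x ∈ F ⊔ oneSpan σ, x - P x ∈ oneSpan σ)
    (l : ℂ) (hl : ‖l‖ = 1) (hatom : 0 < σ {l})
    (f : Lp ℂ 2 σ) (hfF : f ∈ F) (hf0 : f ≠ 0)
    (zf : Lp ℂ 2 σ) (hzf : (zf : ℂ → ℂ) =ᵐ[σ] fun ξ => ξ * f ξ)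
    (heig : P zf = l • f) :
    ∃ c : ℂ, (f : ℂ → ℂ) =ᵐ[σ] fun ξ => c * Set.indicator {l} (fun _ => (1 : ℂ)) ξ := by

  -- zf agrees with some element of F ⊔ oneSpan σ, hence lies in it
  obtain ⟨g, hgmem, hgae⟩ := hinv f hfF
  have hzfg : zf = g := by
    apply Lp.ext
    exact hzf.trans hgae.symm
  have hmem : zf ∈ F ⊔ oneSpan σ := hzfg ▸ hgmem
  have hk : zf - P zf ∈ oneSpan σ := hPker zf hmem
  -- every element of oneSpan is a.e. a constant
  have hspan : ∀ h ∈ oneSpan σ, ∃ c : ℂ, (h : ℂ → ℂ) =ᵐ[σ] fun _ => c := by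
    intro h hh
    refine Submodule.span_induction
      (p := fun x (_ : x ∈ oneSpan σ) => ∃ c : ℂ, (x : ℂ → ℂ) =ᵐ[σ] fun _ => c)
      ?_ ?_ ?_ ?_ hh
    · intro x hx; exact ⟨1, hx⟩
    · exact ⟨0, Lp.coeFn_zero ℂ 2 σ⟩
    · rintro x y _ _ ⟨a, ha⟩ ⟨b, hb⟩
      refine ⟨a + b, ?_⟩
      filter_upwards [Lp.coeFn_add x y, ha, hb] with ξ h1 h2 h3
      rw [h1, Pi.add_apply, h2, h3]
    · rintro r x _ ⟨a, ha⟩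
      refine ⟨r * a, ?_⟩
      filter_upwards [Lp.coeFn_smul r x, ha] with ξ h1 h2
      rw [h1, Pi.smul_apply, h2, smul_eq_mul]
  obtain ⟨c, hc⟩ := hspan _ hk
  -- a.e., ξ * f ξ - l * f ξ = c
  have hPzf : ((P zf : Lp ℂ 2 σ) : ℂ → ℂ) =ᵐ[σ] fun ξ => l * f ξ := by
    rw [heig]
    filter_upwards [Lp.coeFn_smul l f] with ξ h1
    simpa using h1
  have key : ∀ᵐ ξ ∂σ, ξ * f ξ - l * f ξ = c := by
    filter_upwards [Lp.coeFn_sub zf (P zf), hc, hzf, hPzf] with ξ h1 h2 h3 h4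
    rw [← h3, ← h4, ← h2, h1]
    simp
  -- c = 0 because σ {l} > 0
  have hc0 : c = 0 := by
    by_contra hc0
    have hsub : {l} ⊆ {ξ : ℂ | ¬ (ξ * f ξ - l * f ξ = c)} := by
      intro ξ hξ
      rcases hξ with rfl
      simp [sub_self, Ne.symm hc0]
    have : σ {l} = 0 :=
      measure_mono_null hsub (by simpa [ae_iff] using key)
    exact absurd this hatom.ne'
  -- conclude
  refine ⟨(f : ℂ → ℂ) l, ?_⟩
  filter_upwards [key] with ξ hξ
  by_cases hξl : ξ = l
  · subst hξl
    simp [Set.indicator_of_mem]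
  · have : (ξ - l) * f ξ = 0 := by
      rw [sub_mul]; rw [hc0] at hξ; exact hξ
    have hf : (f : ℂ → ℂ) ξ = 0 := by
      rcases mul_eq_zero.mp this with h | h
      · exact absurd (sub_eq_zero.mp h) hξl
      · exact h
    simp [hf, Set.indicator_of_notMem, hξl]
end

section
/- Let σ be a finite Borel measure on the unit circle with σ({λ}) = 0 for a point λ ∈ ℂ. Let F be a finite-dimensional subspace of L²(σ) with z·F ⊆ F ⊕ span{1} (direct sum), 𝒫 the projection onto F along span{1}, and T = 𝒫 M_z : F → F. If f ∈ ker(T - λ) is nonzero, then f = c/(z-λ) in L²(σ) for some nonzero constant c. -/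
open MeasureTheory

/-- If `σ({l}) = 0`, `F` is finite-dimensional with `z·F ⊆ F ⊕ span{1}` (direct sum), and
`T = 𝒫 M_z : F → F` has an eigenvector `f ≠ 0` with eigenvalue `l`, then
`f = c/(z - l)` in `L²(σ)` for some nonzero constant `c`. -/
theorem stmt4 (σ : MeasureTheory.Measure ℂ) [IsFiniteMeasure σ]
    (hsupp : σ {z : ℂ | ‖z‖ ≠ 1} = 0)
    (l : ℂ) (hl : σ {l} = 0)
    (F : Submodule ℂ (Lp ℂ 2 σ)) (hfd : FiniteDimensional ℂ F)
    (hdisj : F ⊓ oneSpan σ = ⊥)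
    (hinv : ∀ f : Lp ℂ 2 σ, f ∈ F →
      ∃ g : Lp ℂ 2 σ, g ∈ F ⊔ oneSpan σ ∧ (g : ℂ → ℂ) =ᵐ[σ] fun ξ => ξ * f ξ)
    (P : Lp ℂ 2 σ →ₗ[ℂ] Lp ℂ 2 σ)
    (hPrange : ∀ x : Lp ℂ 2 σ, P x ∈ F)
    (hPker : ∀ x ∈ F ⊔ oneSpan σ, x - P x ∈ oneSpan σ)
    (f : Lp ℂ 2 σ) (hfF : f ∈ F) (hf0 : f ≠ 0)
    (zf : Lp ℂ 2 σ) (hzf : (zf : ℂ → ℂ) =ᵐ[σ] fun ξ => ξ * f ξ)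
    (heig : P zf = l • f) :
    ∃ c : ℂ, c ≠ 0 ∧ (f : ℂ → ℂ) =ᵐ[σ] fun ξ => c * (ξ - l)⁻¹ := by
  -- every element of oneSpan is a.e. constant
  have haec : ∀ x ∈ oneSpan σ, ∃ c : ℂ, (x : ℂ → ℂ) =ᵐ[σ] fun _ => c := by
    intro x hx
    induction hx using Submodule.span_induction with
    | mem g hg => exact ⟨1, hg⟩
    | zero => exact ⟨0, Lp.coeFn_zero ℂ 2 σ⟩
    | add a b _ _ ha hb =>
        obtain ⟨c1, h1⟩ := ha; obtain ⟨c2, h2⟩ := hb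
        exact ⟨c1 + c2, (Lp.coeFn_add a b).trans (by
          filter_upwards [h1, h2] with ξ e1 e2; simp [e1, e2])⟩
    | smul r a _ ha =>
        obtain ⟨c, h⟩ := ha
        exact ⟨r * c, (Lp.coeFn_smul r a).trans (by
          filter_upwards [h] with ξ e; simp [e])⟩
  obtain ⟨g, hgmem, hg⟩ := hinv f hfF
  have hzg : zf = g := Lp.ext (hzf.trans hg.symm)
  have hzmem : zf ∈ F ⊔ oneSpan σ := hzg ▸ hgmem
  have hker := hPker zf hzmem
  rw [heig] at hker
  obtain ⟨c, hc⟩ := haec _ hker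
  have hne : ∀ᵐ ξ ∂σ, ξ ≠ l := by
    rw [ae_iff]
    convert hl using 2
    ext ξ; simp
  have key : ∀ᵐ ξ ∂σ, f ξ = c * (ξ - l)⁻¹ := by
    filter_upwards [hzf, hc, Lp.coeFn_sub zf (l • f), Lp.coeFn_smul l f, hne]
      with ξ e1 e2 e3 e4 e5
    have h1 : (ξ - l) * f ξ = c := by
      rw [e3] at e2
      simp only [Pi.sub_apply] at e2
      rw [e4, e1] at e2
      simp only [Pi.smul_apply, smul_eq_mul] at e2
      linear_combination e2
    have h2 : ξ - l ≠ 0 := sub_ne_zero.mpr e5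
    field_simp
    linear_combination h1
  refine ⟨c, ?_, key⟩
  intro hc0
  apply hf0
  apply Lp.ext
  filter_upwards [key, Lp.coeFn_zero ℂ 2 σ] with ξ h hz
  simp only [h, hc0, zero_mul, hz, Pi.zero_apply]
end

section
/- Let σ be a finite Borel measure on the unit circle with σ({λ}) = 0, F finite-dimensional in L²(σ) with z·F ⊆ F ⊕ span{1}, T = 𝒫 M_z on F as above. Then the generalized eigenspace (root subspace) G_λ = ker(T - λ)^p, where p is minimal with ker(T-λ)^p = ker(T-λ)^{p+1}, equals span{(z-λ)^{-j} : 1 ≤ j ≤ p}. -/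
open MeasureTheory

/-!
If `A = T - l` and `A y = (z - l) y - c`, then `y = (z - l)⁻¹ (c + A y)` off the null set `{l}`;
by induction every `y ∈ ker A^k` is a.e. a combination of `(z - l)^{-j}`, `1 ≤ j ≤ k`.
Conversely, the chain `ker A^k` is strictly increasing up to `k = p` (once it stalls it stays
constant), and by induction on `k` a vector of `ker A^{k+1} \ ker A^k` has a nonzero coefficient at
`(z - l)^{-(k+1)}`; subtracting the representatives of the lower powers produces an element of
`ker A^{k+1}` equal to `(z - l)^{-(k+1)}`. These representatives show
`(z - l)^{-j} ∈ L²(σ)` for `j ≤ p` and identify both spaces.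
-/

open Filter Finset Submodule

namespace Module.End

theorem ker_pow_le_ker_pow {R M : Type*} [Semiring R] [AddCommMonoid M] [Module R M]
    (f : End R M) {i j : ℕ} (hij : i ≤ j) : LinearMap.ker (f ^ i) ≤ LinearMap.ker (f ^ j) := by
  obtain ⟨m, rfl⟩ := Nat.exists_eq_add_of_le hij
  rw [add_comm, pow_add, mul_eq_comp]
  exact LinearMap.ker_le_ker_comp _ _

theorem ker_pow_lt_ker_pow_succ {K V : Type*} [DivisionRing K] [AddCommGroup V] [Module K V]
    {f : End K V} {p k : ℕ} (hp : LinearMap.ker (f ^ (p - 1)) ≠ LinearMap.ker (f ^ p))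
    (hk : k < p) : LinearMap.ker (f ^ k) < LinearMap.ker (f ^ (k + 1)) := by
  refine lt_of_le_of_ne (f.ker_pow_le_ker_pow k.le_succ) fun heq => hp ?_
  obtain ⟨m, rfl⟩ := Nat.exists_eq_add_of_lt hk
  rw [show k + m + 1 - 1 = k + m by omega, show k + m + 1 = k + (m + 1) by omega,
    ← ker_pow_constant heq, ← ker_pow_constant heq]

end Module.End

theorem MeasureTheory.Lp.coeFn_sum_smul_ae_eq {α ι : Type*} [MeasurableSpace α] {μ : Measure α}
    {p : ENNReal} [Fact (1 ≤ p)] {s : Finset ι} {g : ι → Lp ℂ p μ} {φ : ι → α → ℂ}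
    (hg : ∀ i ∈ s, g i =ᵐ[μ] φ i) (c : ι → ℂ) :
    ⇑(∑ i ∈ s, c i • g i) =ᵐ[μ] fun x => ∑ i ∈ s, c i * φ i x := by
  have hsmul : ∀ᵐ x ∂μ, ∀ i ∈ s, (c i • g i) x = c i * φ i x := by
    rw [eventually_all_finset]
    intro i hi
    filter_upwards [Lp.coeFn_smul (c i) (g i), hg i hi] with x hx hgx
    rw [hx, Pi.smul_apply, hgx, smul_eq_mul]
  filter_upwards [Lp.coeFn_fun_finsetSum s fun i => c i • g i, hsmul] with x hx hsx
  rw [hx]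
  exact sum_congr rfl hsx

theorem MeasureTheory.Lp.eq_sum_smul_of_ae_eq {α ι : Type*} [MeasurableSpace α] {μ : Measure α}
    {p : ENNReal} [Fact (1 ≤ p)] {s : Finset ι} {g : ι → Lp ℂ p μ} {φ : ι → α → ℂ}
    (hg : ∀ i ∈ s, g i =ᵐ[μ] φ i) (c : ι → ℂ) {f : Lp ℂ p μ}
    (hf : f =ᵐ[μ] fun x => ∑ i ∈ s, c i * φ i x) : f = ∑ i ∈ s, c i • g i :=
  Lp.ext (hf.trans (Lp.coeFn_sum_smul_ae_eq hg c).symm)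

variable {σ : Measure ℂ} {F : Submodule ℂ (Lp ℂ 2 σ)}

/-- `A` is the compression to `F` of multiplication by `φ`, along the constants. -/
def IsMulModConst (A : Module.End ℂ F) (φ : ℂ → ℂ) : Prop :=
  ∀ x : F, ∃ c : ℂ, ((A x : Lp ℂ 2 σ) : ℂ → ℂ) =ᵐ[σ]
    fun ξ => φ ξ * ((x : Lp ℂ 2 σ) : ℂ → ℂ) ξ - c

namespace IsMulModConst

variable {A : Module.End ℂ F} {l : ℂ}

theorem sub_smul_id {φ : ℂ → ℂ} (hA : IsMulModConst A φ) (l : ℂ) :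
    IsMulModConst (A - l • LinearMap.id) fun ξ => φ ξ - l := by
  intro x
  obtain ⟨c, hc⟩ := hA x
  refine ⟨c, ?_⟩
  simp only [LinearMap.sub_apply, LinearMap.smul_apply, LinearMap.id_apply,
    Submodule.coe_sub, Submodule.coe_smul]
  filter_upwards [Lp.coeFn_sub ((A x : F) : Lp ℂ 2 σ) (l • (x : Lp ℂ 2 σ)),
    Lp.coeFn_smul l (x : Lp ℂ 2 σ), hc] with ξ hsub hsmul hcξ
  rw [hsub, Pi.sub_apply, hsmul, Pi.smul_apply, hcξ, smul_eq_mul]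
  ring

theorem exists_ae_eq_sum_of_mem_ker_pow (hA : IsMulModConst A fun ξ => ξ - l)
    (hl : σ {l} = 0) : ∀ {k : ℕ} {y : F}, y ∈ LinearMap.ker (A ^ k) → ∃ c : ℕ → ℂ,
      ((y : Lp ℂ 2 σ) : ℂ → ℂ) =ᵐ[σ] fun ξ => ∑ j ∈ range k, c j * (ξ - l)⁻¹ ^ (j + 1)
  | 0, y, hy => ⟨0, by
      obtain rfl : y = 0 := by simpa using hy
      simp only [ZeroMemClass.coe_zero, range_zero, sum_empty]
      exact Lp.coeFn_zero ℂ 2 σ⟩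
  | k + 1, y, hy => by
    have hAy : A y ∈ LinearMap.ker (A ^ k) := by
      rwa [LinearMap.mem_ker, ← Module.End.mul_apply, ← pow_succ]
    obtain ⟨c, hc⟩ := exists_ae_eq_sum_of_mem_ker_pow hA hl hAy
    obtain ⟨c₀, hc₀⟩ := hA y
    refine ⟨fun | 0 => c₀ | j + 1 => c j, ?_⟩
    filter_upwards [hc, hc₀, measure_eq_zero_iff_ae_notMem.mp hl] with ξ hcξ hc₀ξ hξ
    have hξl : ξ - l ≠ 0 := sub_ne_zero.mpr hξ
    calc ((y : Lp ℂ 2 σ) : ℂ → ℂ) ξ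
        = (ξ - l)⁻¹ * (c₀ + ((A y : F) : Lp ℂ 2 σ) ξ) := by
          rw [hc₀ξ]; field_simp; ring
      _ = _ := by
          rw [hcξ, sum_range_succ', mul_add, mul_sum, add_comm]
          simp only [pow_succ]
          ring_nf

theorem exists_mem_ker_pow_ae_eq_inv_pow (hA : IsMulModConst A fun ξ => ξ - l)
    (hl : σ {l} = 0) {k : ℕ} (hk : LinearMap.ker (A ^ k) < LinearMap.ker (A ^ (k + 1)))
    {g : ℕ → F} (hg : ∀ j < k, g j ∈ LinearMap.ker (A ^ (j + 1)) ∧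
      ((g j : Lp ℂ 2 σ) : ℂ → ℂ) =ᵐ[σ] fun ξ => (ξ - l)⁻¹ ^ (j + 1)) :
    ∃ x ∈ LinearMap.ker (A ^ (k + 1)),
      ((x : Lp ℂ 2 σ) : ℂ → ℂ) =ᵐ[σ] fun ξ => (ξ - l)⁻¹ ^ (k + 1) := by
  obtain ⟨y, hy, hyk⟩ := SetLike.exists_of_lt hk
  obtain ⟨c, hc⟩ := hA.exists_ae_eq_sum_of_mem_ker_pow hl hy
  set r : F := ∑ j ∈ range k, c j • g j
  have hr_mem : r ∈ LinearMap.ker (A ^ k) := sum_mem fun j hj =>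
    smul_mem _ _ (A.ker_pow_le_ker_pow (mem_range.mp hj) (hg j (mem_range.mp hj)).1)
  have hr : ((r : Lp ℂ 2 σ) : ℂ → ℂ) =ᵐ[σ]
      fun ξ => ∑ j ∈ range k, c j * (ξ - l)⁻¹ ^ (j + 1) := by
    simp only [r, Submodule.coe_sum, Submodule.coe_smul]
    exact Lp.coeFn_sum_smul_ae_eq (fun j hj => (hg j (mem_range.mp hj)).2) c
  have hck : c k ≠ 0 := by
    intro hck
    have hyr : y = r := Subtype.ext <| Lp.ext <| hc.trans <| by
      simpa only [sum_range_succ, hck, zero_mul, add_zero] using hr.symm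
    exact hyk (hyr ▸ hr_mem)
  refine ⟨(c k)⁻¹ • (y - r), smul_mem _ _ (sub_mem hy (A.ker_pow_le_ker_pow k.le_succ hr_mem)), ?_⟩
  simp only [Submodule.coe_smul, Submodule.coe_sub]
  filter_upwards [Lp.coeFn_smul (c k)⁻¹ ((y : Lp ℂ 2 σ) - (r : Lp ℂ 2 σ)),
    Lp.coeFn_sub (y : Lp ℂ 2 σ) (r : Lp ℂ 2 σ), hc,
    hr] with ξ hsmul hsub hcξ hrξ
  rw [hsmul, Pi.smul_apply, hsub, Pi.sub_apply, hcξ, hrξ, sum_range_succ, smul_eq_mul]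
  field_simp
  ring

theorem exists_ae_eq_inv_pow_of_ker_pow_strictMono (hA : IsMulModConst A fun ξ => ξ - l)
    (hl : σ {l} = 0) : ∀ {p : ℕ}, (∀ k < p, LinearMap.ker (A ^ k) < LinearMap.ker (A ^ (k + 1))) →
      ∃ g : ℕ → F, ∀ j < p, g j ∈ LinearMap.ker (A ^ (j + 1)) ∧
        ((g j : Lp ℂ 2 σ) : ℂ → ℂ) =ᵐ[σ] fun ξ => (ξ - l)⁻¹ ^ (j + 1)
  | 0, _ => ⟨0, fun j hj => absurd hj (Nat.not_lt_zero j)⟩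
  | p + 1, hp => by
    obtain ⟨g, hg⟩ := exists_ae_eq_inv_pow_of_ker_pow_strictMono hA hl (p := p)
      fun k hk => hp k (by omega)
    obtain ⟨x, hx⟩ := hA.exists_mem_ker_pow_ae_eq_inv_pow hl (hp p p.lt_succ_self) hg
    refine ⟨Function.update g p x, fun j hj => ?_⟩
    rcases Nat.lt_succ_iff_lt_or_eq.mp hj with hj | rfl
    · rw [Function.update_of_ne hj.ne]
      exact hg j hj
    · rw [Function.update_self]
      exact hx

theorem map_ker_pow_eq_Qspace (hA : IsMulModConst A fun ξ => ξ - l) (hl : σ {l} = 0) {p : ℕ}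
    (hp : LinearMap.ker (A ^ (p - 1)) ≠ LinearMap.ker (A ^ p)) :
    (LinearMap.ker (A ^ p)).map F.subtype = Qspace σ l p := by
  obtain ⟨g, hg⟩ := hA.exists_ae_eq_inv_pow_of_ker_pow_strictMono hl fun k hk =>
    Module.End.ker_pow_lt_ker_pow_succ hp hk
  apply le_antisymm
  · rintro _ ⟨y, hy, rfl⟩
    obtain ⟨c, hc⟩ := hA.exists_ae_eq_sum_of_mem_ker_pow hl hy
    rw [F.subtype_apply, Lp.eq_sum_smul_of_ae_eq (fun j hj => (hg j (mem_range.mp hj)).2) c hc]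
    exact sum_mem fun j hj => smul_mem _ _ (subset_span
      ⟨j + 1, j.succ_pos, mem_range.mp hj, (hg j (mem_range.mp hj)).2⟩)
  · rw [Qspace, span_le]
    rintro x ⟨j, hj, hjp, hx⟩
    obtain ⟨i, rfl⟩ : ∃ i, j = i + 1 := ⟨j - 1, by omega⟩
    exact ⟨g i, A.ker_pow_le_ker_pow hjp (hg i hjp).1, Lp.ext ((hg i hjp).2.trans hx.symm)⟩

end IsMulModConst

theorem stmt5_general (σ : MeasureTheory.Measure ℂ)
    (l : ℂ) (hl : σ {l} = 0)
    (F : Submodule ℂ (Lp ℂ 2 σ))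
    (T : F →ₗ[ℂ] F)
    (hT : ∀ x : F, ∃ c : ℂ,
      ((T x : Lp ℂ 2 σ) : ℂ → ℂ) =ᵐ[σ] fun ξ => ξ * ((x : Lp ℂ 2 σ) : ℂ → ℂ) ξ - c)
    (p : ℕ)
    (hproper : LinearMap.ker ((T - l • (LinearMap.id : F →ₗ[ℂ] F)) ^ (p - 1)) ≠
      LinearMap.ker ((T - l • (LinearMap.id : F →ₗ[ℂ] F)) ^ p)) :
    Submodule.map F.subtype
        (LinearMap.ker ((T - l • (LinearMap.id : F →ₗ[ℂ] F)) ^ p)) = Qspace σ l p :=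
  (IsMulModConst.sub_smul_id (φ := fun ξ => ξ) hT l).map_ker_pow_eq_Qspace hl hproper

/-- With `σ({l}) = 0`, `F` finite-dimensional, `z·F ⊆ F ⊕ span{1}`, and `T = 𝒫 M_z : F → F`
(characterized by `T x = z·x - c` a.e. for a constant `c`), the root subspace
`ker (T - l)^p`, with `p` minimal such that `ker (T - l)^p = ker (T - l)^{p+1}`, equals
`span{(z - l)^{-j} : 1 ≤ j ≤ p}`. -/
theorem stmt5 (σ : MeasureTheory.Measure ℂ) [IsFiniteMeasure σ]
    (hsupp : σ {z : ℂ | ‖z‖ ≠ 1} = 0)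
    (l : ℂ) (hl : σ {l} = 0)
    (F : Submodule ℂ (Lp ℂ 2 σ)) (hfd : FiniteDimensional ℂ F)
    (hdisj : F ⊓ oneSpan σ = ⊥)
    (hinv : ∀ f : Lp ℂ 2 σ, f ∈ F →
      ∃ g : Lp ℂ 2 σ, g ∈ F ⊔ oneSpan σ ∧ (g : ℂ → ℂ) =ᵐ[σ] fun ξ => ξ * f ξ)
    (T : F →ₗ[ℂ] F)
    (hT : ∀ x : F, ∃ c : ℂ,
      ((T x : Lp ℂ 2 σ) : ℂ → ℂ) =ᵐ[σ] fun ξ => ξ * ((x : Lp ℂ 2 σ) : ℂ → ℂ) ξ - c)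
    (p : ℕ) (hp1 : 1 ≤ p)
    (hstab : LinearMap.ker ((T - l • (LinearMap.id : F →ₗ[ℂ] F)) ^ p) =
      LinearMap.ker ((T - l • (LinearMap.id : F →ₗ[ℂ] F)) ^ (p + 1)))
    (hproper : LinearMap.ker ((T - l • (LinearMap.id : F →ₗ[ℂ] F)) ^ (p - 1)) ≠
      LinearMap.ker ((T - l • (LinearMap.id : F →ₗ[ℂ] F)) ^ p)) :
    Submodule.map F.subtype
        (LinearMap.ker ((T - l • (LinearMap.id : F →ₗ[ℂ] F)) ^ p)) = Qspace σ l p :=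
  stmt5_general σ l hl F T hT p hproper
end
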